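/- arXiv:2403.13143 — 2 statements merged into one kernel-verified Lean document; each statement's English description precedes it below -/
import Mathlib

section
/- (Half of the Hahn–Katětov–Tong insertion theorem) For every upper semicontinuous function f : ℝ → ℝ there exists a continuous function g : ℝ → ℝ such that f(x) ≤ g(x) for all x ∈ ℝ. -/
/-! Upper semicontinuity bounds `f` near each point by a constant; a partition of unity glues
these local constant majorants into a continuous one. -/

/-- `f : ℝ → ℝ` is upper semicontinuous (epsilon-delta definition). -/
def Usco (f : ℝ → ℝ) : Prop :=
  ∀ x₀ : ℝ, ∀ ε > (0:ℝ), ∃ δ > (0:ℝ), ∀ y : ℝ, |y - x₀| < δ → f y < f x₀ + ε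

open Set

theorem Usco.upperSemicontinuous {f : ℝ → ℝ} (hf : Usco f) : UpperSemicontinuous f := by
  intro x y hy
  obtain ⟨δ, hδ, hball⟩ := hf x (y - f x) (sub_pos.2 hy)
  filter_upwards [Metric.ball_mem_nhds x hδ] with z hz
  simpa using hball z (by rwa [← Real.dist_eq])

theorem UpperSemicontinuous.exists_continuous_ge {X : Type*} [TopologicalSpace X] [NormalSpace X]
    [ParacompactSpace X] {f : X → ℝ} (hf : UpperSemicontinuous f) :
    ∃ g : C(X, ℝ), ∀ x, f x ≤ g x :=
  exists_continuous_forall_mem_convex_of_local_const (t := fun x => Ici (f x))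
    (fun _ => convex_Ici _)
    fun x => ⟨f x + 1, (hf x _ (lt_add_one _)).mono fun _ => le_of_lt⟩

theorem usco_dominated_by_continuous (f : ℝ → ℝ) (hf : Usco f) :
    ∃ g : ℝ → ℝ, Continuous g ∧ ∀ x : ℝ, f x ≤ g x := by
  obtain ⟨g, hg⟩ := hf.upperSemicontinuous.exists_continuous_ge
  exact ⟨g, g.continuous, hg⟩
end

section
/- (Sequential Heine–Borel theorem, HBC_s^seq) Let (O_{n,m})_{n,m∈ℕ} be a double sequence of open subsets of ℝ and let (Cₙ)ₙ∈ℕ be a sequence of closed subsets of [0,1] such that Cₙ ⊆ ⋃_{m∈ℕ} O_{n,m} for every n ∈ ℕ. Then there exists g : ℕ → ℕ such that for all n ∈ ℕ, Cₙ ⊆ ⋃_{m ≤ g(n)} O_{n,m}. -/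
theorem IsCompact.exists_subset_biUnion_le {X ι : Type*} [TopologicalSpace X] [Preorder ι]
    [Nonempty ι] [IsDirectedOrder ι] {s : Set X} (hs : IsCompact s) {U : ι → Set X}
    (hU : ∀ i, IsOpen (U i)) (hsU : s ⊆ ⋃ i, U i) : ∃ k, s ⊆ ⋃ i ≤ k, U i := by
  simpa only [Set.accumulate_def] using
    hs.elim_directed_cover (Set.accumulate U) (fun k => isOpen_biUnion fun i _ => hU i)
      (Set.iUnion_accumulate (s := U) ▸ hsU) (Set.monotone_accumulate (s := U)).directed_le

theorem sequential_heine_borel (O : ℕ → ℕ → Set ℝ) (C : ℕ → Set ℝ)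
    (hO : ∀ n m, IsOpen (O n m))
    (hC : ∀ n, IsClosed (C n))
    (hC1 : ∀ n, C n ⊆ Set.Icc (0:ℝ) 1)
    (hcov : ∀ n, C n ⊆ ⋃ m, O n m) :
    ∃ g : ℕ → ℕ, ∀ n : ℕ, C n ⊆ ⋃ m ≤ g n, O n m := by
  have hcompact (n : ℕ) : IsCompact (C n) := isCompact_Icc.of_isClosed_subset (hC n) (hC1 n)
  choose g hg using fun n => (hcompact n).exists_subset_biUnion_le (hO n) (hcov n)
  exact ⟨g, hg⟩
end
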